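/- arXiv:1010.0351 — 2 statements merged into one kernel-verified Lean document; each statement's English description precedes it below -/
import Mathlib

section
/- Let T be a rigid object in C and let f : X → Y be a map in C. Then Hom_C(T, f) = 0 (i.e. f ∘ g = 0 for every map g : T → X) if and only if f factors through an object of ΣT^⊥. -/
/-!
Common setup: `C` is a Hom-finite, Krull-Schmidt (= idempotent complete, given
Hom-finiteness over a field), `k`-linear triangulated category with suspension
functor `Σ = shiftFunctor C (1 : ℤ)`, and `T` is a rigid object of `C`.
-/

noncomputable section

open CategoryTheory CategoryTheory.Limits CategoryTheory.Pretriangulated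

universe v u

namespace PaperBM

variable {C : Type u} [Category.{v} C] [Preadditive C] [HasZeroObject C]
  [HasShift C ℤ] [∀ n : ℤ, (shiftFunctor C n).Additive] [Pretriangulated C]
  [HasFiniteBiproducts C]

/-- `X` lies in `add T`: it is a direct summand of a finite direct sum of copies of `T`. -/
def memAdd (T X : C) : Prop :=
  ∃ (n : ℕ) (s : X ⟶ ⨁ (fun _ : Fin n => T)) (r : (⨁ fun _ : Fin n => T) ⟶ X), s ≫ r = 𝟙 X

/-- `T` is rigid: `Hom_C(T, ΣT) = 0`. -/
def IsRigidObj (T : C) : Prop := ∀ f : T ⟶ (shiftFunctor C (1 : ℤ)).obj T, f = 0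

/-- `Y ∈ T^⊥`, i.e. `Hom_C(X, ΣY) = 0` for all `X ∈ add T`. -/
def memTperp (T Y : C) : Prop :=
  ∀ (X : C), memAdd T X → ∀ f : X ⟶ (shiftFunctor C (1 : ℤ)).obj Y, f = 0

/-- `Y ∈ ⊥T`, i.e. `Hom_C(Y, ΣX) = 0` for all `X ∈ add T`. -/
def memPerpT (T Y : C) : Prop :=
  ∀ (X : C), memAdd T X → ∀ f : Y ⟶ (shiftFunctor C (1 : ℤ)).obj X, f = 0

/-- `Y ∈ ΣT^⊥`, the image of `T^⊥` under the suspension `Σ`. -/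
def memSigmaTperp (T Y : C) : Prop :=
  ∃ Z : C, memTperp T Z ∧ Nonempty (Y ≅ (shiftFunctor C (1 : ℤ)).obj Z)

/-- The map `f` factors through an object belonging to the class `P` of objects. -/
def FactorsThru (P : C → Prop) {A B : C} (f : A ⟶ B) : Prop :=
  ∃ (Z : C) (g : A ⟶ Z) (h : Z ⟶ B), P Z ∧ g ≫ h = f

/-- The class `S̃` of maps `f : X ⟶ Y` such that in a completion
`Σ⁻¹Z →h X →f Y →g Z` of `f` to a triangle (where `A` plays the role of `Σ⁻¹Z`,
so that `Z = ΣA`), both `g` and `h` factor through an object of `ΣT^⊥`. -/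
def Stilde (T : C) : MorphismProperty C := fun X Y f =>
  ∃ (A : C) (h : A ⟶ X) (g : Y ⟶ (shiftFunctor C (1 : ℤ)).obj A),
    (Triangle.mk h f g ∈ distTriang C) ∧
    FactorsThru (memSigmaTperp T) g ∧ FactorsThru (memSigmaTperp T) h

/-- The class `S` of maps `f : X ⟶ Y` such that in a completion
`Σ⁻¹Z →h X →f Y →g Z` of `f` to a triangle (where `A` plays the role of `Σ⁻¹Z`,
so that `Z = ΣA`), `g` factors through an object of `ΣT^⊥` and `Σ⁻¹Z ∈ ΣT^⊥`. -/
def Sclass (T : C) : MorphismProperty C := fun X Y f =>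
  ∃ (A : C) (h : A ⟶ X) (g : Y ⟶ (shiftFunctor C (1 : ℤ)).obj A),
    (Triangle.mk h f g ∈ distTriang C) ∧
    FactorsThru (memSigmaTperp T) g ∧ memSigmaTperp T A

/-- `X ∈ C(T)`: there is a triangle `T₁ → T₀ → X → ΣT₁` with `T₀, T₁ ∈ add T`. -/
def memCT (T X : C) : Prop :=
  ∃ (T₁ T₀ : C) (a : T₁ ⟶ T₀) (b : T₀ ⟶ X) (c : X ⟶ (shiftFunctor C (1 : ℤ)).obj T₁),
    memAdd T T₁ ∧ memAdd T T₀ ∧ (Triangle.mk a b c ∈ distTriang C)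

/-- `f : X₀ ⟶ Y` is a right `P`-approximation of `Y`. -/
def IsRightApprox (P : C → Prop) {X₀ Y : C} (f : X₀ ⟶ Y) : Prop :=
  P X₀ ∧ ∀ (W : C), P W → ∀ g : W ⟶ Y, ∃ g' : W ⟶ X₀, g' ≫ f = g

/-- `f : Y ⟶ X₀` is a left `P`-approximation of `Y`. -/
def IsLeftApprox (P : C → Prop) {Y X₀ : C} (f : Y ⟶ X₀) : Prop :=
  P X₀ ∧ ∀ (W : C), P W → ∀ g : Y ⟶ W, ∃ g' : X₀ ⟶ W, f ≫ g' = g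

/-- The map `f : X₀ ⟶ Y` is right minimal. -/
def IsRightMinimal {X₀ Y : C} (f : X₀ ⟶ Y) : Prop :=
  ∀ g : X₀ ⟶ X₀, g ≫ f = f → IsIso g

/-- The ring map `End (op T) → (End T)ᵐᵒᵖ`, `r ↦ op r.unop` (port helper). -/
def endOpRingHom (T : C) : End (Opposite.op T) →+* (End T)ᵐᵒᵖ where
  toFun r := MulOpposite.op r.unop
  map_one' := rfl
  map_mul' _ _ := rfl
  map_zero' := rfl
  map_add' _ _ := rfl

/-- The functor `H = Hom_C(T, -) : C ⥤ Mod End_C(T)ᵒᵖ`.  Here, with Mathlib's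
conventions, the endomorphism ring `End (Opposite.op T)` of `T` viewed in `Cᵒᵖ` plays
the role of `End_C(T)ᵒᵖ`, so that each `Hom_C(T, X)` is a left module over it. -/
abbrev homFunctor (T : C) : C ⥤ ModuleCat.{v} (End (Opposite.op T)) :=
  preadditiveCoyonedaObj T ⋙ ModuleCat.restrictScalars (endOpRingHom T)

/-- The predicate on `End_C(T)ᵒᵖ`-modules of being finite-dimensional (equivalently,
since `End_C(T)` is a finite-dimensional algebra, finitely generated). -/
abbrev isFinDim (T : C) : ModuleCat.{v} (End (Opposite.op T)) → Prop :=
  fun M => Module.Finite (End (Opposite.op T)) M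

/-- The category `mod End_C(T)ᵒᵖ` of finite-dimensional `End_C(T)ᵒᵖ`-modules. -/
abbrev fdMod (T : C) := ObjectProperty.FullSubcategory (isFinDim T)

/-- The ideal relation on `C(T)` of maps factoring through an object of `ΣT^⊥`. -/
def homRelCT (T : C) : HomRel (ObjectProperty.FullSubcategory (memCT T)) :=
  fun A B f g => FactorsThru (memSigmaTperp T) ((f.hom - g.hom : A.obj ⟶ B.obj))

/-- The ideal relation on `C(T)` of maps factoring through an object of `add ΣT`. -/
def homRelCTadd (T : C) : HomRel (ObjectProperty.FullSubcategory (memCT T)) :=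
  fun A B f g => FactorsThru (memAdd ((shiftFunctor C (1 : ℤ)).obj T)) ((f.hom - g.hom : A.obj ⟶ B.obj))

/-- The ideal relation on `C` of maps factoring through an object of `add ΣT`. -/
def homRelAdd (T : C) : HomRel C :=
  fun A B f g => FactorsThru (memAdd ((shiftFunctor C (1 : ℤ)).obj T)) (f - g)

end PaperBM

open PaperBM

/-!
Choose a right `add T`-approximation `t : T₀ ⟶ X` (a basis of `Hom(T, X)` gives one, by
Hom-finiteness) and complete it to a triangle `T₀ ⟶ X ⟶ Z ⟶ ΣT₀`. If `Hom(T, f) = 0`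
then `t ≫ f = 0`, so `f` factors through `X ⟶ Z`. Moreover `Z ∈ ΣT^⊥`: a map
`A ⟶ Z` with `A ∈ add T` becomes zero in `ΣT₀` by rigidity, hence lifts to `X`, hence
factors through `t`, and so vanishes. Conversely `Hom(T, ΣT^⊥) = 0` by definition.
-/

namespace PaperBM

variable {C : Type u} [Category.{v} C] [Preadditive C] [HasFiniteBiproducts C]

lemma memAdd_self (T : C) : memAdd T T :=
  ⟨1, biproduct.lift fun _ => 𝟙 T, biproduct.π _ 0, by simp⟩

lemma memAdd_biproduct (T : C) (n : ℕ) : memAdd T (⨁ fun _ : Fin n => T) :=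
  ⟨n, 𝟙 _, 𝟙 _, by simp⟩

lemma memAdd.map {T A : C} (hA : memAdd T A) (F : C ⥤ C) [F.Additive] :
    memAdd (F.obj T) (F.obj A) := by
  obtain ⟨n, s, r, hsr⟩ := hA
  refine ⟨n, F.map s ≫ biproduct.lift fun j => F.map (biproduct.π _ j),
    biproduct.desc (fun j => F.map (biproduct.ι (fun _ : Fin n => T) j)) ≫ F.map r, ?_⟩
  have hid : (biproduct.lift fun j => F.map (biproduct.π (fun _ : Fin n => T) j)) ≫
      biproduct.desc (fun j => F.map (biproduct.ι (fun _ : Fin n => T) j)) = 𝟙 _ := by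
    rw [biproduct.lift_desc, ← F.map_id, ← biproduct.total, F.map_sum]
    simp only [F.map_comp]
  rw [Category.assoc, reassoc_of% hid, ← F.map_comp, hsr, F.map_id]

lemma memAdd.eq_zero_of_forall_precomp {T A Y : C} (hA : memAdd T A) (u : A ⟶ Y)
    (h : ∀ g : T ⟶ A, g ≫ u = 0) : u = 0 := by
  obtain ⟨n, s, r, hsr⟩ := hA
  have hru : r ≫ u = 0 := biproduct.hom_ext' _ _ fun j => by
    rw [comp_zero, ← Category.assoc, h]
  rw [← Category.id_comp u, ← hsr, Category.assoc, hru, comp_zero]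

lemma memAdd.eq_zero_of_forall_postcomp {T B Y : C} (hB : memAdd T B) (u : Y ⟶ B)
    (h : ∀ g : B ⟶ T, u ≫ g = 0) : u = 0 := by
  obtain ⟨n, s, r, hsr⟩ := hB
  have hus : u ≫ s = 0 := biproduct.hom_ext _ _ fun j => by
    rw [zero_comp, Category.assoc, h]
  rw [← Category.comp_id u, ← hsr, ← Category.assoc, hus, zero_comp]

lemma exists_isRightApprox_memAdd (k : Type*) [Field k] [Linear k C]
    [∀ X Y : C, FiniteDimensional k (X ⟶ Y)] (T X : C) :
    ∃ (T₀ : C) (t : T₀ ⟶ X), IsRightApprox (memAdd T) t := by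
  let b := Module.finBasis k (T ⟶ X)
  let t : (⨁ fun _ : Fin (Module.finrank k (T ⟶ X)) => T) ⟶ X := biproduct.desc b
  have hT : ∀ g : T ⟶ X, ∃ g', g' ≫ t = g := fun g =>
    ⟨biproduct.lift fun j => b.repr g j • 𝟙 T, by
      simp only [t, biproduct.lift_desc, Linear.smul_comp, Category.id_comp]
      exact b.sum_repr g⟩
  refine ⟨_, t, memAdd_biproduct T _, fun A ⟨n, s, r, hsr⟩ g => ?_⟩
  choose v hv using fun j => hT (biproduct.ι (fun _ : Fin n => T) j ≫ r ≫ g)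
  have hvt : biproduct.desc v ≫ t = r ≫ g := biproduct.hom_ext' _ _ fun j => by simp [hv j]
  exact ⟨s ≫ biproduct.desc v, by rw [Category.assoc, hvt, reassoc_of% hsr]⟩

variable [HasShift C ℤ]

lemma IsRigidObj.eq_zero [(shiftFunctor C (1 : ℤ)).Additive] {T A B : C} (hT : IsRigidObj T)
    (hA : memAdd T A) (hB : memAdd T B)
    (u : A ⟶ (shiftFunctor C (1 : ℤ)).obj B) : u = 0 :=
  (hB.map _).eq_zero_of_forall_postcomp u fun _ =>
    hA.eq_zero_of_forall_precomp _ fun _ => hT _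

lemma memSigmaTperp_iff {T Z : C} :
    memSigmaTperp T Z ↔ ∀ A, memAdd T A → ∀ g : A ⟶ Z, g = 0 := by
  constructor
  · rintro ⟨W, hW, ⟨e⟩⟩ A hA g
    exact (cancel_mono e.hom).1 (by rw [zero_comp]; exact hW A hA _)
  · intro h
    let e : (shiftFunctor C (1 : ℤ)).obj ((shiftFunctor C (-1 : ℤ)).obj Z) ≅ Z :=
      (shiftFunctorCompIsoId C (-1 : ℤ) 1 (by norm_num)).app Z
    refine ⟨_, fun A hA g => (cancel_mono e.hom).1 ?_, ⟨e.symm⟩⟩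
    rw [zero_comp]
    exact h A hA _

variable [HasZeroObject C] [∀ n : ℤ, (shiftFunctor C n).Additive] [Pretriangulated C]

lemma memSigmaTperp_of_isRightApprox {T T₀ X Z : C} (hT : IsRigidObj T) {t : T₀ ⟶ X}
    (ht : IsRightApprox (memAdd T) t) {p : X ⟶ Z} {q : Z ⟶ (shiftFunctor C (1 : ℤ)).obj T₀}
    (hd : Triangle.mk t p q ∈ distTriang C) : memSigmaTperp T Z := by
  refine memSigmaTperp_iff.2 fun A hA g => ?_
  obtain ⟨g', rfl⟩ := Triangle.coyoneda_exact₃ _ hd g (hT.eq_zero hA ht.1 (g ≫ q))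
  obtain ⟨w, rfl⟩ := ht.2 A hA g'
  have htp : t ≫ p = 0 := comp_distTriang_mor_zero₁₂ _ hd
  change (w ≫ t) ≫ p = 0
  rw [Category.assoc, htp, comp_zero]

end PaperBM

/-- For a rigid object `T` and a map `f : X ⟶ Y`, we have `Hom_C(T, f) = 0`
(i.e. `g ≫ f = 0` for every `g : T ⟶ X`) if and only if `f` factors through an
object of `ΣT^⊥`. -/
theorem statement_4 {C : Type u} [Category.{v} C] [Preadditive C] [HasZeroObject C]
    [HasShift C ℤ] [∀ n : ℤ, (shiftFunctor C n).Additive] [Pretriangulated C]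
    [HasFiniteBiproducts C]
    {k : Type*} [Field k] [CategoryTheory.Linear k C]
    [∀ X Y : C, FiniteDimensional k (X ⟶ Y)] [IsIdempotentComplete C]
    (T : C) (hT : IsRigidObj T) {X Y : C} (f : X ⟶ Y) :
    (∀ g : T ⟶ X, g ≫ f = 0) ↔ FactorsThru (memSigmaTperp T) f := by
  constructor
  · intro h
    obtain ⟨T₀, t, ht⟩ := exists_isRightApprox_memAdd k T X
    obtain ⟨Z, p, q, hd⟩ := distinguished_cocone_triangle t
    have htf : t ≫ f = 0 := ht.1.eq_zero_of_forall_precomp _ fun g => by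
      rw [← Category.assoc, h]
    obtain ⟨u, hu⟩ := Triangle.yoneda_exact₂ _ hd f htf
    exact ⟨Z, p, u, memSigmaTperp_of_isRightApprox hT ht hd, hu.symm⟩
  · rintro ⟨Z, a, c, hZ, rfl⟩ g
    rw [← Category.assoc, memSigmaTperp_iff.1 hZ T (memAdd_self T) (g ≫ a), zero_comp]
end
end

section
/- Let T be a rigid object in C, let U be an object of C(T), let u : U → Y be a map in C and let s : X → Y be a map in the class S. Then u factors through s, i.e. there exists h : U → X with u = s ∘ h. -/
/-!
Common setup: `C` is a Hom-finite, Krull-Schmidt (= idempotent complete, given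
Hom-finiteness over a field), `k`-linear triangulated category with suspension
functor `Σ = shiftFunctor C (1 : ℤ)`, and `T` is a rigid object of `C`.
-/

noncomputable section

open CategoryTheory CategoryTheory.Limits CategoryTheory.Pretriangulated

universe v u

open PaperBM

/-!
For `U ∈ C(T)` with triangle `T₁ → T₀ → U →c ΣT₁`, and `s` completed to a triangle
`A → X →s Y →g ΣA`, it suffices that `u ≫ g = 0`. Since `g` factors through some `Z ∈ ΣT^⊥`,
the map `U → Z` vanishes on `T₀ ∈ add T` and hence factors through `c`; the remaining map
`ΣT₁ → Z → ΣA` is zero because `A ∈ ΣT^⊥` and `Hom(ΣT₁, ΣA) ≅ Hom(T₁, A)`.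
-/

namespace PaperBM

variable {C : Type*} [Category C] [Preadditive C] [HasShift C ℤ] [HasFiniteBiproducts C]

lemma memSigmaTperp.hom_eq_zero {T X Z : C} (hZ : memSigmaTperp T Z) (hX : memAdd T X)
    (f : X ⟶ Z) : f = 0 := by
  obtain ⟨Z', hZ', ⟨e⟩⟩ := hZ
  simpa using congrArg (· ≫ e.inv) (hZ' X hX (f ≫ e.hom))

lemma memSigmaTperp.shift_hom_eq_zero {T X A : C} (hA : memSigmaTperp T A) (hX : memAdd T X)
    (f : X⟦(1 : ℤ)⟧ ⟶ A⟦(1 : ℤ)⟧) : f = 0 := by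
  obtain ⟨f₀, rfl⟩ := (shiftFunctor C (1 : ℤ)).map_surjective f
  rw [hA.hom_eq_zero hX f₀, Functor.map_zero]

variable [HasZeroObject C] [∀ n : ℤ, (shiftFunctor C n).Additive] [Pretriangulated C]

lemma memCT.comp_eq_zero {T U Z A : C} (hU : memCT T U) (hZ : memSigmaTperp T Z)
    (hA : memSigmaTperp T A) (p : U ⟶ Z) (q : Z ⟶ A⟦(1 : ℤ)⟧) : p ≫ q = 0 := by
  obtain ⟨T₁, T₀, a, b, c, hT₁, hT₀, hTri⟩ := hU
  obtain ⟨w, hw⟩ : ∃ w : T₁⟦(1 : ℤ)⟧ ⟶ Z, p = c ≫ w :=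
    Triangle.yoneda_exact₃ _ hTri p (hZ.hom_eq_zero hT₀ (b ≫ p))
  rw [hw, Category.assoc, hA.shift_hom_eq_zero hT₁ (w ≫ q), comp_zero]

lemma memCT.comp_eq_zero_of_factorsThru {T U Y A : C} (hU : memCT T U)
    (hA : memSigmaTperp T A) (u : U ⟶ Y) {g : Y ⟶ A⟦(1 : ℤ)⟧}
    (hg : FactorsThru (memSigmaTperp T) g) : u ≫ g = 0 := by
  obtain ⟨Z, p, q, hZ, rfl⟩ := hg
  rw [← Category.assoc, hU.comp_eq_zero hZ hA]

end PaperBM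

/-- If `U ∈ C(T)`, `u : U ⟶ Y` and `s : X ⟶ Y` belongs to `S`, then `u` factors
through `s`. -/
theorem statement_12 {C : Type u} [Category.{v} C] [Preadditive C] [HasZeroObject C]
    [HasShift C ℤ] [∀ n : ℤ, (shiftFunctor C n).Additive] [Pretriangulated C]
    [HasFiniteBiproducts C]
    {k : Type*} [Field k] [CategoryTheory.Linear k C]
    [∀ X Y : C, FiniteDimensional k (X ⟶ Y)] [IsIdempotentComplete C]
    (T : C) (hT : IsRigidObj T) {U X Y : C} (hU : memCT T U)
    (u : U ⟶ Y) (s : X ⟶ Y) (hs : Sclass T s) :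
    ∃ h : U ⟶ X, h ≫ s = u := by
  obtain ⟨A, h, g, hTri, hg, hA⟩ := hs
  obtain ⟨h', hh'⟩ := Triangle.coyoneda_exact₃ _ hTri u (hU.comp_eq_zero_of_factorsThru hA u hg)
  exact ⟨h', hh'.symm⟩
end
end
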